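/- Let u and v be rational unit vectors of the same colour with u ≠ -v. Then every rational unit vector x satisfying ⟪x, u⟫ = ⟪v, u⟫ has the same colour as u; that is, the circle {x on the sphere : ⟪x, u⟫ = ⟪v, u⟫} is monochromatic on rational points. -/

import Mathlib

open scoped RealInnerProductSpace

/-- The colour class of the rational unit vectors in `ℝ³` whose `i`-th reduced
integer coordinate is odd (red for `i = 0`, white for `i = 1`, black for
`i = 2`). -/
def colourClass (i : Fin 3) : Set (EuclideanSpace ℝ (Fin 3)) :=
  {y | ‖y‖ = 1 ∧ ∃ n : Fin 3 → ℤ, ∃ d : ℤ, 0 < d ∧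
    Int.gcd (Int.gcd (n 0) (n 1) : ℤ) (n 2) = 1 ∧
    (∀ j, y j = (n j : ℝ) / (d : ℝ)) ∧ Odd (n i)}

/-!
Squares are `0` or `1` mod `4`, so if `a² + b² + c² = d²` with `a, b, c` not all even, then `d`
is odd and exactly one of `a, b, c` is odd. Hence the reduced coordinates `n_x, n_u, n_v` of
`x, u, v` have odd denominators `s, d_u, d_v`, and `n_u ≡ n_v ≡ eᵢ (mod 2)`. Clearing
denominators in `⟪x, u⟫ = ⟪v, u⟫` gives `d_v (n_x ⬝ n_u) = s (n_v ⬝ n_u)`, which reduces mod `2`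
to `n_x i ≡ n_v i ≡ 1`.
-/

lemma Int.sq_emod_four_eq_emod_two (n : ℤ) : n ^ 2 % 4 = n % 2 := by
  rcases Int.even_or_odd' n with ⟨k, rfl | rfl⟩ <;> ring_nf <;> omega

lemma emod_two_of_sq_add_sq_add_sq_eq_sq {a b c d : ℤ} (h : a ^ 2 + b ^ 2 + c ^ 2 = d ^ 2)
    (hprim : ¬(2 ∣ a ∧ 2 ∣ b ∧ 2 ∣ c)) : d % 2 = 1 ∧ a % 2 + b % 2 + c % 2 = 1 := by
  have := a.sq_emod_four_eq_emod_two
  have := b.sq_emod_four_eq_emod_two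
  have := c.sq_emod_four_eq_emod_two
  have := d.sq_emod_four_eq_emod_two
  omega

section PrimitiveSumOfThreeSquares

variable {n : Fin 3 → ℤ} {d : ℤ}

lemma emod_two_of_dotProduct_self_eq_sq (h : n ⬝ᵥ n = d ^ 2)
    (hg : Int.gcd (Int.gcd (n 0) (n 1) : ℤ) (n 2) = 1) :
    d % 2 = 1 ∧ n 0 % 2 + n 1 % 2 + n 2 % 2 = 1 := by
  refine emod_two_of_sq_add_sq_add_sq_eq_sq
    (by simpa [dotProduct, Fin.sum_univ_three, sq] using h) fun ⟨h0, h1, h2⟩ ↦ ?_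
  have := Int.dvd_coe_gcd (Int.dvd_coe_gcd h0 h1) h2
  rw [hg] at this
  norm_num at this

lemma odd_of_dotProduct_self_eq_sq (h : n ⬝ᵥ n = d ^ 2)
    (hg : Int.gcd (Int.gcd (n 0) (n 1) : ℤ) (n 2) = 1) : Odd d :=
  Int.odd_iff.2 (emod_two_of_dotProduct_self_eq_sq h hg).1

lemma odd_iff_eq_of_dotProduct_self_eq_sq (h : n ⬝ᵥ n = d ^ 2)
    (hg : Int.gcd (Int.gcd (n 0) (n 1) : ℤ) (n 2) = 1) {i : Fin 3} (hi : Odd (n i)) (j : Fin 3) :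
    Odd (n j) ↔ j = i := by
  have := (emod_two_of_dotProduct_self_eq_sq h hg).2
  rw [Int.odd_iff] at hi ⊢
  fin_cases i <;> fin_cases j <;> simp at hi ⊢ <;> omega

end PrimitiveSumOfThreeSquares

lemma exists_primitive_of_dotProduct_self_eq_sq {m : Fin 3 → ℤ} {D : ℤ} (hD : 0 < D)
    (h : m ⬝ᵥ m = D ^ 2) : ∃ (n : Fin 3 → ℤ) (d : ℤ), 0 < d ∧
      Int.gcd (Int.gcd (n 0) (n 1) : ℤ) (n 2) = 1 ∧ ∀ j, (m j : ℝ) / D = n j / d := by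
  set g := Int.gcd (Int.gcd (m 0) (m 1) : ℤ) (m 2) with hg
  have hdvd : ∀ j, (g : ℤ) ∣ m j := by
    intro j
    fin_cases j
    · exact (Int.gcd_dvd_left _ _).trans (Int.gcd_dvd_left _ _)
    · exact (Int.gcd_dvd_left _ _).trans (Int.gcd_dvd_right _ _)
    · exact Int.gcd_dvd_right _ _
  -- `g² ∣ m ⬝ᵥ m = D²`, so dividing by `g` keeps the denominator integral.
  have hgD : (g : ℤ) ∣ D := by
    refine (Int.pow_dvd_pow_iff two_ne_zero).1 (h ▸ Finset.dvd_sum fun j _ ↦ ?_)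
    exact sq (g : ℤ) ▸ mul_dvd_mul (hdvd j) (hdvd j)
  have hg0 : 0 < g := by
    refine Nat.pos_of_ne_zero fun hg0 ↦ ?_
    have hm : m = 0 := funext fun j ↦ Int.zero_dvd.1 (by simpa [hg0] using hdvd j)
    simp only [hm, dotProduct_zero] at h
    exact hD.ne' (pow_eq_zero_iff two_ne_zero |>.1 h.symm)
  choose n hn using hdvd
  obtain ⟨d, rfl⟩ := hgD
  refine ⟨n, d, pos_of_mul_pos_right hD (by positivity), ?_, fun j ↦ ?_⟩
  · refine (Nat.mul_eq_left hg0.ne').1 ?_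
    conv_rhs => rw [hg, hn 0, hn 1, hn 2]
    rw [Int.gcd_mul_left, Int.natAbs_natCast, Nat.cast_mul, Int.gcd_mul_left, Int.natAbs_natCast]
  · rw [hn j]
    push_cast
    exact mul_div_mul_left _ _ (by positivity)

section IntegerCoordinates

variable {ι : Type*} [Fintype ι]

lemma exists_intCast_div_of_ratCast (q : ι → ℚ) :
    ∃ (m : ι → ℤ) (D : ℤ), 0 < D ∧ ∀ j, (q j : ℝ) = m j / D := by
  classical
  refine ⟨fun j ↦ (q j).num * ∏ k ∈ Finset.univ.erase j, ((q k).den : ℤ),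
    ∏ k, ((q k).den : ℤ), Finset.prod_pos fun k _ ↦ mod_cast (q k).pos, fun j ↦ ?_⟩
  rw [eq_div_iff (by positivity), ← Finset.mul_prod_erase _ _ (Finset.mem_univ j)]
  push_cast
  rw [← mul_assoc, ← Rat.cast_natCast, ← Rat.cast_mul, Rat.mul_den_eq_num, Rat.cast_intCast]

variable {m n : ι → ℤ}

lemma dotProduct_self_eq_sq_of_norm_eq_one {y : EuclideanSpace ℝ ι} (hy : ‖y‖ = 1) {d : ℤ}
    (hd : d ≠ 0) (hm : ∀ j, y j = m j / d) : m ⬝ᵥ m = d ^ 2 := by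
  have h := EuclideanSpace.real_norm_sq_eq y
  simp only [hy, hm, div_pow] at h
  rw [← Finset.sum_div, eq_div_iff (by positivity), one_pow, one_mul] at h
  exact_mod_cast (by simpa [dotProduct, sq] using h.symm : ((m ⬝ᵥ m : ℤ) : ℝ) = (d : ℝ) ^ 2)

lemma inner_eq_dotProduct_div {x y : EuclideanSpace ℝ ι} {s d : ℤ}
    (hx : ∀ j, x j = m j / s) (hy : ∀ j, y j = n j / d) :
    ⟪x, y⟫ = (m ⬝ᵥ n : ℤ) / (s * d) := by
  simp only [EuclideanSpace.inner_eq_star_dotProduct, dotProduct, hx, hy, star_trivial]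
  push_cast
  rw [Finset.sum_div]
  congr 1 with j
  ring

lemma intCast_dotProduct_eq_apply [DecidableEq ι] {i : ι} (hn : ∀ j, Odd (n j) ↔ j = i)
    (v : ι → ℤ) : ((v ⬝ᵥ n : ℤ) : ZMod 2) = v i := by
  have hn2 : ∀ j, (n j : ZMod 2) = if j = i then 1 else 0 := fun j ↦ by
    split_ifs with hj
    · exact ZMod.intCast_eq_one_iff_odd.2 ((hn j).2 hj)
    · exact ZMod.intCast_eq_zero_iff_even.2 (Int.not_odd_iff_even.1 (mt (hn j).1 hj))
  simp [dotProduct, hn2]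

lemma odd_apply_of_mul_dotProduct_eq [DecidableEq ι] {i : ι} {w : ι → ℤ} {a b : ℤ}
    (ha : Odd a) (hb : Odd b) (hn : ∀ j, Odd (n j) ↔ j = i) (hw : Odd (w i))
    (h : a * (m ⬝ᵥ n) = b * (w ⬝ᵥ n)) : Odd (m i) := by
  have h2 := congrArg (fun z : ℤ ↦ (z : ZMod 2)) h
  simp only [Int.cast_mul, intCast_dotProduct_eq_apply hn, ZMod.intCast_eq_one_iff_odd.2 ha,
    ZMod.intCast_eq_one_iff_odd.2 hb, ZMod.intCast_eq_one_iff_odd.2 hw, one_mul] at h2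
  exact ZMod.intCast_eq_one_iff_odd.1 h2

end IntegerCoordinates

lemma exists_primitive_of_norm_eq_one {y : EuclideanSpace ℝ (Fin 3)} (hy : ‖y‖ = 1)
    (hq : ∀ j, ∃ q : ℚ, y j = (q : ℝ)) : ∃ (n : Fin 3 → ℤ) (d : ℤ), 0 < d ∧
      Int.gcd (Int.gcd (n 0) (n 1) : ℤ) (n 2) = 1 ∧ ∀ j, y j = n j / d := by
  choose q hq using hq
  obtain ⟨m, D, hD, hm⟩ := exists_intCast_div_of_ratCast q
  obtain ⟨n, d, hd, hg, hn⟩ := exists_primitive_of_dotProduct_self_eq_sq hD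
    (dotProduct_self_eq_sq_of_norm_eq_one hy hD.ne' fun j ↦ (hq j).trans (hm j))
  exact ⟨n, d, hd, hg, fun j ↦ by rw [hq, hm, hn]⟩

theorem circle_monochromatic (i : Fin 3) (u v : EuclideanSpace ℝ (Fin 3))
    (hu : u ∈ colourClass i) (hv : v ∈ colourClass i)
    (x : EuclideanSpace ℝ (Fin 3)) (hx : ‖x‖ = 1)
    (hxq : ∀ j, ∃ q : ℚ, x j = (q : ℝ))
    (hxc : ⟪x, u⟫ = ⟪v, u⟫) :
    x ∈ colourClass i := by
  obtain ⟨hu1, nu, du, hdu, hgu, hru, hnu⟩ := hu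
  obtain ⟨hv1, nv, dv, hdv, hgv, hrv, hnv⟩ := hv
  obtain ⟨nx, s, hs, hgx, hrx⟩ := exists_primitive_of_norm_eq_one hx hxq
  have hcleared : dv * (nx ⬝ᵥ nu) = s * (nv ⬝ᵥ nu) := by
    rw [inner_eq_dotProduct_div hrx hru, inner_eq_dotProduct_div hrv hru,
      div_eq_div_iff (by positivity) (by positivity)] at hxc
    have : ((dv * (nx ⬝ᵥ nu) * du : ℤ) : ℝ) = (s * (nv ⬝ᵥ nu) * du : ℤ) := by
      push_cast
      linear_combination hxc
    exact mul_right_cancel₀ hdu.ne' (mod_cast this)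
  refine ⟨hx, nx, s, hs, hgx, hrx, odd_apply_of_mul_dotProduct_eq ?_ ?_ ?_ hnv hcleared⟩
  · exact odd_of_dotProduct_self_eq_sq (dotProduct_self_eq_sq_of_norm_eq_one hv1 hdv.ne' hrv) hgv
  · exact odd_of_dotProduct_self_eq_sq (dotProduct_self_eq_sq_of_norm_eq_one hx hs.ne' hrx) hgx
  · exact odd_iff_eq_of_dotProduct_self_eq_sq
      (dotProduct_self_eq_sq_of_norm_eq_one hu1 hdu.ne' hru) hgu hnu
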